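/- Let R be a commutative (possibly non-unital) ring with all (n+1)-fold products zero, m ≥ 1 an integer, and a, b ∈ R. If a = b + m·h + b·h for some h ∈ R, then p_n(a) − p_n(b) ∈ m^n·R + J_{n+1}, where p_n(x) = Σ_{k=1}^{n} (-1)^{k-1} (ℓ(n)/k) m^{n-k} x^k and J_{n+1} is the subgroup generated by all (n+1)-fold products of elements of R; in fact p_n(a) = p_n(b) + m^n·v for some v in the subring generated by h. -/

import Mathlib

/-- `ℓ(n) = lcm(1,…,n)`. -/
def lcmN (n : ℕ) : ℕ := (Finset.Icc 1 n).lcm id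

/-- `npow1 a j = a^{j+1}` in a non-unital ring. -/
def npow1 {R : Type*} [NonUnitalCommRing R] (a : R) : ℕ → R
  | 0 => a
  | j + 1 => npow1 a j * a

/-- Evaluation of `p_n(x) = ∑_{k=1}^n (-1)^{k-1} (ℓ(n)/k) m^{n-k} x^k` at `a` in a
non-unital ring (the constant term vanishes). -/
def pEval {R : Type*} [NonUnitalCommRing R] (m : ℕ) (n : ℕ) (a : R) : R :=
  ∑ k ∈ Finset.Icc 1 n,
    ((-1 : ℤ) ^ (k - 1) * ((lcmN n / k : ℕ) : ℤ) * (m : ℤ) ^ (n - k)) • npow1 a (k - 1)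

/-!
`pEval m n x` is `ℓ(n) m^n` times the degree-`n` truncation of `log (1 + x/m)`, and the hypothesis
says `m + a = (m + b)(1 + h)`. Additivity of `log` therefore gives
`p_n(a) = p_n(b) + m^n p_n^{(1)}(h)` up to terms of degree `> n` in `b` and `h`, which vanish
in `R`.

To make this precise, work in `S[X]` over a characteristic-zero domain, with `x` and `y` divisible
by `X`. Since `(m + t) · (p_n(t))' = ℓ(n) (m^n - (-t)^n) · t'`, the derivative of the defect times
the cofactor `(m + x)(1 + y)` is divisible by `X^n`; the cofactor is prime to `X`, so the defect is
divisible by `X^(n+1)`. Taking `x X, y X` over `ℤ[x, y]` and specializing to `(ℤ ⊕ R)[X]`, the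
defect lies in the Rees algebra of the ideal `R`, whose `(n+1)`-st power is zero, so it vanishes.
-/

open Finset Polynomial
open scoped Pointwise

def logCoeff (m n k : ℕ) : ℤ := (-1) ^ (k - 1) * ((lcmN n / k : ℕ) : ℤ) * (m : ℤ) ^ (n - k)

lemma logCoeff_mul_self {m n k : ℕ} (hk : k ∈ Icc 1 n) :
    logCoeff m n k * k = (-1) ^ (k - 1) * lcmN n * (m : ℤ) ^ (n - k) := by
  have hdvd : (lcmN n / k) * k = lcmN n := Nat.div_mul_cancel (dvd_lcm (f := id) hk)
  rw [logCoeff, mul_right_comm, mul_assoc _ _ (k : ℤ), ← Nat.cast_mul, hdvd]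

lemma sum_Icc_one_eq_sum_range {M : Type*} [AddCommMonoid M] (f : ℕ → M) (n : ℕ) :
    ∑ k ∈ Icc 1 n, f k = ∑ i ∈ range n, f (i + 1) := by
  rw [range_eq_Ico, sum_Ico_add', zero_add, Ico_add_one_right_eq_Icc]

section TruncLog

variable {B B' : Type*} [CommRing B] [CommRing B'] (m n : ℕ)

def truncLog (t : B) : B := ∑ k ∈ Icc 1 n, logCoeff m n k • t ^ k

def logDefect (x y : B) : B :=
  truncLog m n (x + (m : ℤ) • y + x * y) - truncLog m n x - (m : ℤ) ^ n • truncLog 1 n y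

variable {m n}

lemma map_truncLog (f : B →+* B') (t : B) : f (truncLog m n t) = truncLog m n (f t) := by
  simp [truncLog]

lemma map_logDefect (f : B →+* B') (x y : B) :
    f (logDefect m n x y) = logDefect m n (f x) (f y) := by
  simp [logDefect, map_truncLog]

lemma truncLog_mem {S : Type*} [SetLike S B] [SubringClass S B] {s : S} {t : B} (ht : t ∈ s) :
    truncLog m n t ∈ s :=
  sum_mem fun _ _ => zsmul_mem (pow_mem ht _) _

lemma logDefect_mem {S : Type*} [SetLike S B] [SubringClass S B] {s : S} {x y : B}
    (hx : x ∈ s) (hy : y ∈ s) : logDefect m n x y ∈ s :=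
  sub_mem (sub_mem (truncLog_mem (add_mem (add_mem hx (zsmul_mem hy _)) (mul_mem hx hy)))
    (truncLog_mem hx)) (zsmul_mem (truncLog_mem hy) _)

lemma dvd_truncLog {a t : B} (ha : a ∣ t) : a ∣ truncLog m n t :=
  dvd_sum fun k hk => by
    rw [zsmul_eq_mul]
    exact (dvd_pow ha (by simp at hk; omega)).mul_left _

end TruncLog

section Derivative

variable {S : Type*} [CommRing S] {m n : ℕ}

lemma mul_derivative_truncLog (p : S[X]) :
    (m + p) * derivative (truncLog m n p) = lcmN n * (m ^ n - (-p) ^ n) * derivative p := by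
  have hterm : ∀ k ∈ Icc 1 n, derivative (logCoeff m n k • p ^ k)
      = lcmN n * ((-p) ^ (k - 1) * (m : S[X]) ^ (n - 1 - (k - 1))) * derivative p := by
    intro k hk
    have hcoeff := congrArg (Int.cast : ℤ → S[X]) (logCoeff_mul_self (m := m) hk)
    obtain ⟨i, rfl⟩ : ∃ i, k = i + 1 := ⟨k - 1, by simp at hk; omega⟩
    simp only [Nat.add_sub_cancel, Nat.sub_sub, add_comm 1 i] at hcoeff ⊢
    rw [zsmul_eq_mul, derivative_intCast_mul, derivative_pow, Nat.add_sub_cancel, C_eq_natCast,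
      neg_pow]
    push_cast at hcoeff ⊢
    linear_combination (p ^ i * derivative p) * hcoeff
  have hgeom := geom_sum₂_mul (-p) (m : S[X]) n
  rw [truncLog, derivative_sum, sum_congr rfl hterm, ← sum_mul, ← mul_sum,
    sum_Icc_one_eq_sum_range (fun k => (-p) ^ (k - 1) * (m : S[X]) ^ (n - 1 - (k - 1)))]
  simp only [Nat.add_sub_cancel]
  linear_combination (-(lcmN n : S[X]) * derivative p) * hgeom

lemma dvd_logDefect {a x y : S} (hx : a ∣ x) (hy : a ∣ y) : a ∣ logDefect m n x y := by
  have hf : a ∣ x + (m : ℤ) • y + x * y :=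
    dvd_add (dvd_add hx (by rw [zsmul_eq_mul]; exact hy.mul_left _)) (hx.mul_right _)
  refine dvd_sub (dvd_sub (dvd_truncLog hf) (dvd_truncLog hx)) ?_
  rw [zsmul_eq_mul]
  exact (dvd_truncLog hy).mul_left _

lemma X_pow_succ_dvd_of_derivative [NoZeroDivisors S] [CharZero S] {p : S[X]} (h0 : X ∣ p)
    (h : X ^ n ∣ derivative p) : X ^ (n + 1) ∣ p := by
  rw [X_pow_dvd_iff] at h ⊢
  rintro (_ | d) hd
  · exact X_dvd_iff.mp h0
  · have hd' := h d (by omega)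
    rw [coeff_derivative] at hd'
    exact (mul_eq_zero.mp hd').resolve_right (by exact_mod_cast d.succ_ne_zero)

lemma mul_derivative_logDefect (p q : S[X]) :
    ((m : S[X]) + p) * (1 + q) * derivative (logDefect m n p q)
      = lcmN n * ((1 + q) * (-p) ^ n * derivative p
        + (m : S[X]) ^ n * ((m : S[X]) + p) * (-q) ^ n * derivative q
        - (-(p + (m : S[X]) * q + p * q)) ^ n * derivative (p + (m : S[X]) * q + p * q)) := by
  have hf := mul_derivative_truncLog (m := m) (n := n) (p + (m : S[X]) * q + p * q)
  have hp := mul_derivative_truncLog (m := m) (n := n) p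
  have hq := mul_derivative_truncLog (m := 1) (n := n) q
  have hf' : derivative (p + (m : S[X]) * q + p * q)
      = derivative p + m * derivative q + derivative p * q + p * derivative q := by
    simp only [derivative_add, derivative_mul, derivative_natCast]
    ring
  simp only [Nat.cast_one, one_pow] at hq
  simp only [logDefect, zsmul_eq_mul, Int.cast_natCast, Int.cast_pow, derivative_sub,
    derivative_mul, derivative_natCast, derivative_pow, zero_mul, zero_add, mul_zero] at hf ⊢
  linear_combination hf - (1 + q) * hp - m ^ n * (m + p) * hq + lcmN n * m ^ n * hf'

lemma X_pow_succ_dvd_logDefect [IsDomain S] [CharZero S] (hm : m ≠ 0) {p q : S[X]} (hp : X ∣ p)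
    (hq : X ∣ q) : X ^ (n + 1) ∣ logDefect m n p q := by
  refine X_pow_succ_dvd_of_derivative (dvd_logDefect hp hq) ?_
  have hcofactor : ¬ X ∣ ((m : S[X]) + p) * (1 + q) := by
    rw [X_dvd_iff] at hp hq ⊢
    simp [mul_coeff_zero, hp, hq, hm]
  refine prime_X.pow_dvd_of_dvd_mul_left n hcofactor ?_
  have hf : X ∣ p + (m : S[X]) * q + p * q := dvd_add (dvd_add hp (hq.mul_left _)) (hp.mul_right _)
  rw [mul_derivative_logDefect]
  refine Dvd.dvd.mul_left (dvd_sub (dvd_add ?_ ?_) ?_) _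
  · exact ((pow_dvd_pow_of_dvd (dvd_neg.mpr hp) n).mul_left _).mul_right _
  · exact ((pow_dvd_pow_of_dvd (dvd_neg.mpr hq) n).mul_left _).mul_right _
  · exact (pow_dvd_pow_of_dvd (dvd_neg.mpr hf) n).mul_right _

end Derivative

lemma eq_zero_of_mem_reesAlgebra {A : Type*} [CommRing A] {I : Ideal A} {N : ℕ} (hI : I ^ N = ⊥)
    {p : A[X]} (hp : p ∈ reesAlgebra I) (hX : X ^ N ∣ p) : p = 0 := by
  ext i
  rw [coeff_zero]
  rcases lt_or_ge i N with hi | hi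
  · exact X_pow_dvd_iff.mp hX i hi
  · rw [← Ideal.mem_bot, ← hI]
    exact Ideal.pow_le_pow_right hi ((mem_reesAlgebra_iff I p).mp hp i)

lemma Ideal.span_pow_eq_bot {A : Type*} [CommRing A] {s : Set A} {N : ℕ}
    (hs : ∀ z ∈ s ^ N, z = 0) : Ideal.span s ^ N = ⊥ :=
  (Submodule.span_pow (R := A) s N).trans (Submodule.span_eq_bot.mpr hs)

lemma logDefect_eq_zero_of_pow_eq_bot {A : Type*} [CommRing A] {I : Ideal A} {m n : ℕ}
    (hI : I ^ (n + 1) = ⊥) (hm : m ≠ 0) {x y : A} (hx : x ∈ I) (hy : y ∈ I) :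
    logDefect m n x y = 0 := by
  let φ : MvPolynomial (Fin 2) ℤ →+* A := MvPolynomial.eval₂Hom (Int.castRingHom A) ![x, y]
  have huniv := X_pow_succ_dvd_logDefect (S := MvPolynomial (Fin 2) ℤ) (n := n) hm
    (dvd_mul_left X (C (MvPolynomial.X 0))) (dvd_mul_left X (C (MvPolynomial.X 1)))
  have hdvd := _root_.map_dvd (mapRingHom φ) huniv
  rw [map_logDefect, map_pow, map_mul, map_mul, coe_mapRingHom, map_C, map_C, map_X] at hdvd
  have hφx : φ (MvPolynomial.X 0) = x := MvPolynomial.eval₂Hom_X' _ _ _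
  have hφy : φ (MvPolynomial.X 1) = y := MvPolynomial.eval₂Hom_X' _ _ _
  rw [hφx, hφy] at hdvd
  have hrees : ∀ z ∈ I, C z * X ∈ reesAlgebra I := fun z hz => by
    rw [C_mul_X_eq_monomial, reesAlgebra.monomial_mem, pow_one]
    exact hz
  have hzero := eq_zero_of_mem_reesAlgebra hI (logDefect_mem (hrees x hx) (hrees y hy)) hdvd
  simpa only [map_logDefect, map_zero, map_mul, coe_evalRingHom, eval_C, eval_X, mul_one]
    using congrArg (evalRingHom 1) hzero

section Unitization

open Unitization

variable {R : Type*} [NonUnitalCommRing R] {n : ℕ}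

lemma inr_npow1 (x : R) (j : ℕ) :
    ((npow1 x j : R) : Unitization ℤ R) = (x : Unitization ℤ R) ^ (j + 1) := by
  induction j with
  | zero => exact (pow_one _).symm
  | succ j ih => rw [npow1, inr_mul, ih, ← pow_succ]

lemma inr_zsmul (k : ℤ) (x : R) : ((k • x : R) : Unitization ℤ R) = k • (x : Unitization ℤ R) :=
  map_zsmul (inrNonUnitalAlgHom ℤ R) k x

lemma inr_pEval (m n : ℕ) (x : R) :
    ((pEval m n x : R) : Unitization ℤ R) = truncLog m n (x : Unitization ℤ R) := by
  change inrNonUnitalAlgHom ℤ R _ = _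
  rw [pEval, map_sum]
  refine sum_congr rfl fun k hk => ?_
  rw [map_zsmul]
  change (_ : ℤ) • ((npow1 x (k - 1) : R) : Unitization ℤ R) = _
  rw [inr_npow1, Nat.sub_add_cancel (by simp at hk; omega)]
  rfl

lemma npow1_mem {s : NonUnitalSubring R} {x : R} (hx : x ∈ s) (j : ℕ) : npow1 x j ∈ s := by
  induction j with
  | zero => exact hx
  | succ j ih => exact mul_mem ih hx

lemma pEval_mem {s : NonUnitalSubring R} {x : R} (hx : x ∈ s) (m n : ℕ) : pEval m n x ∈ s :=
  sum_mem fun _ _ => zsmul_mem (npow1_mem hx _) _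

lemma exists_eq_inr_foldl_of_mem_range_inr_pow {k : ℕ} {z : Unitization ℤ R}
    (hz : z ∈ Set.range (inr : R → Unitization ℤ R) ^ (k + 1)) :
    ∃ (x : R) (l : List R), l.length = k ∧ z = l.foldl (· * ·) x := by
  induction k generalizing z with
  | zero =>
    have hpow := pow_one (Set.range (inr : R → Unitization ℤ R))
    obtain ⟨x, rfl⟩ := hpow ▸ hz
    exact ⟨x, [], rfl, rfl⟩
  | succ k ih =>
    have hpow := pow_succ (Set.range (inr : R → Unitization ℤ R)) (k + 1)
    rw [hpow] at hz
    obtain ⟨u, hu, _, ⟨s, rfl⟩, rfl⟩ := hz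
    obtain ⟨x, l, hl, rfl⟩ := ih hu
    exact ⟨x, l ++ [s], by simp [hl], by simp [List.foldl_append]⟩

lemma eq_zero_of_mem_range_inr_pow
    (hnil : ∀ (x : R) (l : List R), l.length = n → l.foldl (· * ·) x = 0) {z : Unitization ℤ R}
    (hz : z ∈ Set.range (inr : R → Unitization ℤ R) ^ (n + 1)) : z = 0 := by
  obtain ⟨x, l, hl, rfl⟩ := exists_eq_inr_foldl_of_mem_range_inr_pow hz
  rw [hnil x l hl, inr_zero]

lemma pEval_eq_add_zsmul_pEval
    (hnil : ∀ (x : R) (l : List R), l.length = n → l.foldl (· * ·) x = 0) {m : ℕ} (hm : m ≠ 0)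
    {a b h : R} (hab : a = b + (m : ℤ) • h + b * h) :
    pEval m n a = pEval m n b + ((m : ℤ) ^ n) • pEval 1 n h := by
  have hdefect := logDefect_eq_zero_of_pow_eq_bot
    (Ideal.span_pow_eq_bot (A := Unitization ℤ R) fun _ => eq_zero_of_mem_range_inr_pow hnil) hm
    (Ideal.subset_span (Set.mem_range_self b)) (Ideal.subset_span (Set.mem_range_self h))
  have ha : (a : Unitization ℤ R) = b + (m : ℤ) • (h : Unitization ℤ R) + b * h := by
    rw [hab, inr_add, inr_add, inr_mul, inr_zsmul]
  apply inr_injective (R := ℤ)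
  rw [inr_add, inr_zsmul, inr_pEval, inr_pEval, inr_pEval, ha]
  rw [logDefect] at hdefect
  linear_combination hdefect

end Unitization

theorem stmt16_general (R : Type*) [NonUnitalCommRing R] (n : ℕ)
    (hnil : ∀ (x : R) (l : List R), l.length = n → l.foldl (· * ·) x = 0)
    (m : ℕ) (hm : 1 ≤ m) (a b h : R)
    (hab : a = b + (m : ℤ) • h + b * h) :
    ∃ v ∈ NonUnitalSubring.closure ({h} : Set R),
      pEval m n a = pEval m n b + ((m : ℤ) ^ n) • v := by
  exact ⟨pEval 1 n h, pEval_mem (NonUnitalSubring.subset_closure (Set.mem_singleton h)) 1 n,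
    pEval_eq_add_zsmul_pEval hnil (by omega) hab⟩

/-- in a commutative non-unital ring with all `(n+1)`-fold products zero,
if `a = b + m·h + b·h` then `p_n(a) = p_n(b) + m^n·v` for some `v` in the subring
generated by `h`; in particular `p_n(a) − p_n(b) ∈ m^n·R + J_{n+1}`. -/
theorem stmt16 (R : Type*) [NonUnitalCommRing R] (n : ℕ) (hn : 1 ≤ n)
    (hnil : ∀ (x : R) (l : List R), l.length = n → l.foldl (· * ·) x = 0)
    (m : ℕ) (hm : 1 ≤ m) (a b h : R)
    (hab : a = b + (m : ℤ) • h + b * h) :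
    ∃ v ∈ NonUnitalSubring.closure ({h} : Set R),
      pEval m n a = pEval m n b + ((m : ℤ) ^ n) • v :=
  stmt16_general R n hnil m hm a b h hab
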